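/- arXiv:2007.02126 — 2 statements merged into one kernel-verified Lean document; each statement's English description precedes it below -/
import Mathlib

section
/- For real numbers μ1, μ2 and positive reals σ1, σ2, the Kullback–Leibler divergence between the Gaussian distributions N(μ1, σ1²) and N(μ2, σ2²) equals log(σ2/σ1) + (σ1² + (μ1 − μ2)²)/(2σ2²) − 1/2. -/
open MeasureTheory Real

/-- Density of the Gaussian distribution with mean `μ` and standard deviation `σ`. -/
noncomputable def gaussianPdf (μ σ x : ℝ) : ℝ :=
  (1 / (σ * Real.sqrt (2 * Real.pi))) * Real.exp (-(x - μ)^2 / (2 * σ^2))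

/-- KL divergence between two Gaussians, as an integral. -/
noncomputable def klGaussian (μ₁ σ₁ μ₂ σ₂ : ℝ) : ℝ :=
  ∫ x : ℝ, gaussianPdf μ₁ σ₁ x * Real.log (gaussianPdf μ₁ σ₁ x / gaussianPdf μ₂ σ₂ x)

/-! The log-likelihood ratio `log (p/q)` is a quadratic polynomial in `x`, so its mean under
`N(μ₁, σ₁²)` only involves second moments about a point: `E (X - c)² = σ₁² + (μ₁ - c)²`.
Mathlib's `gaussianReal` supplies these moments once `gaussianPdf` is identified with its density. -/

open ProbabilityTheory NNReal

lemma gaussianPdf_eq_gaussianPDFReal (μ : ℝ) {σ : ℝ} (hσ : 0 < σ) :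
    gaussianPdf μ σ = gaussianPDFReal μ (σ ^ 2).toNNReal := by
  ext x
  have hσ2 : ((σ ^ 2).toNNReal : ℝ) = σ ^ 2 := Real.coe_toNNReal _ (sq_nonneg σ)
  rw [gaussianPdf, gaussianPDFReal, hσ2, one_div,
    show 2 * π * σ ^ 2 = σ ^ 2 * (2 * π) by ring, Real.sqrt_mul (sq_nonneg σ),
    Real.sqrt_sq hσ.le]

lemma integral_gaussianPdf_mul (μ : ℝ) {σ : ℝ} (hσ : 0 < σ) (f : ℝ → ℝ) :
    ∫ x, gaussianPdf μ σ x * f x = ∫ x, f x ∂gaussianReal μ (σ ^ 2).toNNReal := by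
  rw [integral_gaussianReal_eq_integral_smul (by positivity), gaussianPdf_eq_gaussianPDFReal μ hσ]
  rfl

lemma log_gaussianPdf_div_gaussianPdf {σ₁ σ₂ : ℝ} (hσ₁ : 0 < σ₁) (hσ₂ : 0 < σ₂) (μ₁ μ₂ x : ℝ) :
    Real.log (gaussianPdf μ₁ σ₁ x / gaussianPdf μ₂ σ₂ x) =
      Real.log (σ₂ / σ₁) + (x - μ₂) ^ 2 / (2 * σ₂ ^ 2) - (x - μ₁) ^ 2 / (2 * σ₁ ^ 2) := by
  have hratio : gaussianPdf μ₁ σ₁ x / gaussianPdf μ₂ σ₂ x =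
      σ₂ / σ₁ * Real.exp ((x - μ₂) ^ 2 / (2 * σ₂ ^ 2) - (x - μ₁) ^ 2 / (2 * σ₁ ^ 2)) := by
    rw [gaussianPdf, gaussianPdf, mul_div_mul_comm, ← Real.exp_sub]
    congr 1
    · field_simp
    · ring_nf
  rw [hratio, Real.log_mul (by positivity) (Real.exp_ne_zero _), Real.log_exp, add_sub_assoc]

section Moments

variable {μ : ℝ} {v : ℝ≥0}

lemma integrable_sub_sq_gaussianReal (c : ℝ) :
    Integrable (fun x ↦ (x - c) ^ 2) (gaussianReal μ v) :=
  ((memLp_id_gaussianReal 2).sub (memLp_const c)).integrable_sq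

lemma integral_sq_gaussianReal : ∫ x, x ^ 2 ∂gaussianReal μ v = v + μ ^ 2 := by
  have h := variance_eq_sub (memLp_id_gaussianReal' (μ := μ) (v := v) 2 (by simp))
  rw [variance_id_gaussianReal] at h
  simp only [id, Pi.pow_apply, integral_id_gaussianReal] at h
  linarith

lemma integral_sub_sq_gaussianReal (c : ℝ) :
    ∫ x, (x - c) ^ 2 ∂gaussianReal μ v = v + (μ - c) ^ 2 := by
  rw [← integral_sq_gaussianReal, ← gaussianReal_map_sub_const,
    integral_map (by fun_prop) (by fun_prop)]

end Moments

theorem kl_gaussian_eq (μ₁ μ₂ σ₁ σ₂ : ℝ) (hσ₁ : 0 < σ₁) (hσ₂ : 0 < σ₂) :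
    klGaussian μ₁ σ₁ μ₂ σ₂ =
      Real.log (σ₂ / σ₁) + (σ₁^2 + (μ₁ - μ₂)^2) / (2 * σ₂^2) - 1/2 := by
  have hσ₁sq : ((σ₁ ^ 2).toNNReal : ℝ) = σ₁ ^ 2 := Real.coe_toNNReal _ (sq_nonneg σ₁)
  simp_rw [klGaussian, log_gaussianPdf_div_gaussianPdf hσ₁ hσ₂, integral_gaussianPdf_mul μ₁ hσ₁]
  rw [integral_sub ((integrable_const _).fun_add ((integrable_sub_sq_gaussianReal μ₂).div_const _))
      ((integrable_sub_sq_gaussianReal μ₁).div_const _),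
    integral_add (integrable_const _) ((integrable_sub_sq_gaussianReal μ₂).div_const _),
    integral_div, integral_div, integral_sub_sq_gaussianReal, integral_sub_sq_gaussianReal,
    integral_const, probReal_univ, smul_eq_mul, one_mul, hσ₁sq]
  field_simp
  ring
end

section
/- Let μ < 1/2 and σ > 0, and set l = 2σ²/(1 − 2μ) > 0. Define f(x) = log σ − (1/2) log(x(1−x)) + (x(1−x) + (x−μ)²)/(2σ²) − 1/2 for x ∈ (0,1) (this is KL(N(x, x(1−x)) || N(μ, σ²))). Then f attains its minimum on (0,1) at x* = (1 + l − √(1 + l²))/2. -/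
/-!
Since `x(1-x) + (x-μ)² = (1-2μ)x + μ²`, the function is, up to a constant, `x / l - ½ log(x(1-x))`,
which is convex on `(0,1)`. Its critical point solves `x² - (1+l)x + l/2 = 0`, whose root in `(0,1)`
is `x*`. That `x*` is the minimum follows from the tangent-line bounds `log t ≤ log t* + t/t* - 1`
and `x(1-x) ≤ x*(1-x*) + (1-2x*)(x-x*)`.
-/

open Real

theorem one_add_sub_sqrt_one_add_sq_div_two_mem_Ioo {l : ℝ} (hl : 0 < l) :
    (1 + l - √(1 + l ^ 2)) / 2 ∈ Set.Ioo (0 : ℝ) 1 := by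
  have h_lt : √(1 + l ^ 2) < 1 + l := (sqrt_lt' (by linarith)).2 (by nlinarith)
  have h_gt : l < √(1 + l ^ 2) := (lt_sqrt hl.le).2 (by linarith)
  constructor <;> linarith

theorem mul_one_sub_two_mul_one_add_sub_sqrt (l : ℝ) :
    let a := (1 + l - √(1 + l ^ 2)) / 2
    l * (1 - 2 * a) = 2 * (a * (1 - a)) := by
  intro a
  have hs : √(1 + l ^ 2) ^ 2 = 1 + l ^ 2 := sq_sqrt (by positivity)
  simp only [a]
  linear_combination hs / 2

/-- `hcrit` says that the derivative `1/l - (1-2a)/(2a(1-a))` vanishes at `a`. -/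
theorem isMinOn_div_sub_half_log_mul_one_sub {l a : ℝ} (hl : 0 < l) (ha : a ∈ Set.Ioo (0 : ℝ) 1)
    (hcrit : l * (1 - 2 * a) = 2 * (a * (1 - a))) :
    IsMinOn (fun x => x / l - log (x * (1 - x)) / 2) (Set.Ioo 0 1) a := by
  rw [isMinOn_iff]
  rintro x ⟨hx0, hx1⟩
  have ht : 0 < x * (1 - x) := mul_pos hx0 (by linarith)
  have hta : 0 < a * (1 - a) := mul_pos ha.1 (by linarith [ha.2])
  have h_log : log (x * (1 - x)) - log (a * (1 - a)) ≤ x * (1 - x) / (a * (1 - a)) - 1 := by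
    rw [← log_div ht.ne' hta.ne']
    exact log_le_sub_one_of_pos (div_pos ht hta)
  have h_tangent : x * (1 - x) / (a * (1 - a)) - 1 ≤ 2 * (x - a) / l := by
    rw [div_sub_one hta.ne', div_le_div_iff₀ hta hl]
    have h_concave : (x * (1 - x) - a * (1 - a)) * l
        = 2 * (x - a) * (a * (1 - a)) - l * (x - a) ^ 2 := by
      linear_combination (x - a) * hcrit
    linarith [mul_nonneg hl.le (sq_nonneg (x - a))]
  have h_split : 2 * (x - a) / l = 2 * (x / l) - 2 * (a / l) := by ring
  linarith

theorem kl_min_attained (μ σ : ℝ) (hμ : μ < 1/2) (hσ : 0 < σ) :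
    let l : ℝ := 2 * σ^2 / (1 - 2 * μ)
    let xstar : ℝ := (1 + l - Real.sqrt (1 + l^2)) / 2
    let f : ℝ → ℝ := fun x =>
      Real.log σ - (1/2) * Real.log (x * (1 - x))
        + (x * (1 - x) + (x - μ)^2) / (2 * σ^2) - 1/2
    xstar ∈ Set.Ioo (0:ℝ) 1 ∧ ∀ x ∈ Set.Ioo (0:ℝ) 1, f xstar ≤ f x := by
  intro l xstar f
  have hl : 0 < l := div_pos (by positivity) (by linarith)
  have hmem : xstar ∈ Set.Ioo (0 : ℝ) 1 := one_add_sub_sqrt_one_add_sq_div_two_mem_Ioo hl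
  have hmin := isMinOn_div_sub_half_log_mul_one_sub hl hmem
    (mul_one_sub_two_mul_one_add_sub_sqrt l)
  have hf : ∀ y, f y = log σ - 1 / 2 + μ ^ 2 / (2 * σ ^ 2) + (y / l - log (y * (1 - y)) / 2) := by
    intro y
    simp only [f, l]
    field_simp
    ring
  refine ⟨hmem, fun x hx => ?_⟩
  rw [hf, hf]
  linarith [isMinOn_iff.1 hmin x hx]
end
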